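/- arXiv:2404.14141 — 3 statements merged into one kernel-verified Lean document; each statement's English description precedes it below -/
import Mathlib

section
/- (Lemma 1: low types gain more from self-promotion.) Let b_l, b_h, v_l, v_h, S be real numbers with 0 < b_l < b_h < 1 and 0 < v_l ≤ v_h < S. Set Δsp_l = 1 − b_l and Δsp_h = 1 − b_h. Then Δsp_l·(S − v_l)/(S·(S + Δsp_l)) > Δsp_h·(S − v_h)/(S·(S + Δsp_h)). -/
theorem low_types_gain_more_from_self_promotion
    (b_l b_h v_l v_h S : ℝ)
    (hbl : 0 < b_l) (hblh : b_l < b_h) (hbh : b_h < 1)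
    (hvl : 0 < v_l) (hvlh : v_l ≤ v_h) (hvhS : v_h < S) :
    (1 - b_l) * (S - v_l) / (S * (S + (1 - b_l))) >
      (1 - b_h) * (S - v_h) / (S * (S + (1 - b_h))) := by
  have hS : 0 < S := lt_trans (lt_of_lt_of_le hvl hvlh) hvhS
  have h1 : 0 < S * (S + (1 - b_l)) := by nlinarith
  have h2 : 0 < S * (S + (1 - b_h)) := by nlinarith
  rw [gt_iff_lt, div_lt_div_iff₀ h2 h1]
  nlinarith [mul_pos hS (mul_pos (sub_pos.2 hblh) (sub_pos.2 hvhS)),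
    mul_nonneg (mul_nonneg (by linarith : (0:ℝ) ≤ 1 - b_l) (by linarith : (0:ℝ) ≤ 1 - b_h)) (by linarith : (0:ℝ) ≤ v_h - v_l),
    mul_nonneg (mul_nonneg hS.le (by linarith : (0:ℝ) ≤ 1 - b_l)) (by linarith : (0:ℝ) ≤ v_h - v_l)]
end

section
/- (Lemma 3: expected marginal gain increases with the number of agents already sabotaged.) Let b, v, S be real numbers with b > 0, v > 0, S > 0, and define f : ℝ → ℝ by f(t) = t·b·v/(S·(S − t·b)). Then for all real x, y with 0 ≤ x < y and (y + 1)·b < S, one has f(y + 1) − f(y) > f(x + 1) − f(x). -/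
theorem sabotage_marginal_gain_increasing (b v S : ℝ) (hb : b > 0) (hv : v > 0) (hS : S > 0) :
    ∀ x y : ℝ, 0 ≤ x → x < y → (y + 1) * b < S →
      (y + 1) * b * v / (S * (S - (y + 1) * b)) - y * b * v / (S * (S - y * b)) >
        (x + 1) * b * v / (S * (S - (x + 1) * b)) - x * b * v / (S * (S - x * b)) := by
  intro x y hx hxy hyS
  have hy1 : 0 < S - (y + 1) * b := by linarith
  have hy0 : 0 < S - y * b := by nlinarith
  have hx1 : 0 < S - (x + 1) * b := by nlinarith
  have hx0 : 0 < S - x * b := by nlinarith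
  have key : ∀ t : ℝ, 0 < S - t * b → 0 < S - (t + 1) * b →
      (t + 1) * b * v / (S * (S - (t + 1) * b)) - t * b * v / (S * (S - t * b)) =
        v * b / ((S - t * b) * (S - (t + 1) * b)) := by
    intro t h0 h1
    field_simp
    ring
  rw [key x hx0 hx1, key y hy0 hy1]
  apply div_lt_div_of_pos_left (by positivity)
  · exact mul_pos hy0 hy1
  · apply mul_lt_mul'' <;> nlinarith
end

section
/- (Order of bounds.) Let v_h, v_l, b_h, b_l, S, h, l be real numbers with 0 < b_l < b_h, v_h > 0, v_l > 0, v_h·b_l = v_l·b_h, b_h·(h − 1) > b_l·(l − 1), and S − b_h·h² > 0. Then v_h·b_l/((S − h·b_h·(h − 1) − b_l·l)·(S − h·b_h·(h − 1) − b_l·(l − 1))) < v_l·b_h/((S − b_h·h²)·(S − b_h·h² + b_h)). -/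
theorem order_of_bounds (v_h v_l b_h b_l S h l : ℝ)
    (hbl : 0 < b_l) (hblh : b_l < b_h)
    (hvh : v_h > 0) (hvl : v_l > 0)
    (hcross : v_h * b_l = v_l * b_h)
    (hlevel : b_h * (h - 1) > b_l * (l - 1))
    (hpos : S - b_h * h ^ 2 > 0) :
    v_h * b_l /
        ((S - h * b_h * (h - 1) - b_l * l) * (S - h * b_h * (h - 1) - b_l * (l - 1))) <
      v_l * b_h / ((S - b_h * h ^ 2) * (S - b_h * h ^ 2 + b_h)) := by
  rw [hcross]
  have hbh : 0 < b_h := hbl.trans hblh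
  have hnum : 0 < v_l * b_h := mul_pos hvl hbh
  have hd1 : S - b_h * h ^ 2 < S - h * b_h * (h - 1) - b_l * l := by nlinarith
  have hd2 : S - b_h * h ^ 2 + b_h < S - h * b_h * (h - 1) - b_l * (l - 1) := by nlinarith
  have h3 : 0 < (S - b_h * h ^ 2) * (S - b_h * h ^ 2 + b_h) := by nlinarith
  have h2 : (S - b_h * h ^ 2) * (S - b_h * h ^ 2 + b_h) <
      (S - h * b_h * (h - 1) - b_l * l) * (S - h * b_h * (h - 1) - b_l * (l - 1)) := by
    nlinarith
  exact div_lt_div_of_pos_left hnum h3 h2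
end
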